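/- Let 0 < C < 1 and 0 ≤ η < 1. Then ∫₀^η ∫_{−C√(1−y²)}^{C√(1−y²)} (1 − x² − y²)^{−3/2} dx dy = (2C/√(1−C²)) · artanh η. Equivalently, the hyperbolic area of the distance-band segment B^C_η = {(x,y) : x²/C² + y² ≤ 1, 0 ≤ y ≤ η} is (2C/√(1−C²)) artanh η. -/

import Mathlib

noncomputable def artanh (x : ℝ) : ℝ := Real.log ((1 + x) / (1 - x)) / 2

/-!
Integrate in `x` first. With `b = 1 - y²`, the function `x ↦ x / (b √(b - x²))` is an
antiderivative of `(b - x²)^(-3/2)`; at the ends `x = ±C√b` of the chord we have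
`b - x² = b (1 - C²)`, so the chord at height `y` contributes `2C / (√(1 - C²) (1 - y²))`.
Since `artanh' = 1 / (1 - y²)`, integrating in `y` gives the result.
-/

open Set MeasureTheory

lemma rpow_neg_three_halves {t : ℝ} (ht : 0 < t) : t ^ (-(3:ℝ)/2) = (t * √t)⁻¹ := by
  rw [show (-(3:ℝ)/2) = -(1 + 1/2) by ring, Real.rpow_neg ht.le, Real.rpow_add ht, Real.rpow_one,
    ← Real.sqrt_eq_rpow]

lemma hasDerivAt_div_mul_sqrt_sub_sq {b x : ℝ} (hx : x ^ 2 < b) :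
    HasDerivAt (fun x => x / (b * √(b - x ^ 2))) ((b - x ^ 2) ^ (-(3:ℝ)/2)) x := by
  have ht : 0 < b - x ^ 2 := sub_pos.mpr hx
  have hb : 0 < b := lt_of_le_of_lt (sq_nonneg x) hx
  have hs : 0 < √(b - x ^ 2) := Real.sqrt_pos.mpr ht
  have hss : √(b - x ^ 2) ^ 2 = b - x ^ 2 := Real.sq_sqrt ht.le
  have hsqrt : HasDerivAt (fun x => √(b - x ^ 2)) (-(2 * x) / (2 * √(b - x ^ 2))) x := by
    refine HasDerivAt.sqrt ?_ ht.ne'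
    simpa using (hasDerivAt_pow 2 x).const_sub b
  refine ((hasDerivAt_id' x).div (hsqrt.const_mul b) (by positivity)).congr_deriv ?_
  rw [rpow_neg_three_halves ht]
  field_simp
  linear_combination (-x ^ 2) * hss

lemma integral_sub_sq_rpow_neg_three_halves {a b : ℝ} (ha : a ^ 2 < b) :
    ∫ x in -a..a, (b - x ^ 2) ^ (-(3:ℝ)/2) = 2 * a / (b * √(b - a ^ 2)) := by
  have hx : ∀ x ∈ uIcc (-a) a, x ^ 2 < b := by
    intro x hx
    rcases mem_uIcc.mp hx with ⟨h1, h2⟩ | ⟨h1, h2⟩ <;> nlinarith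
  have hint : IntervalIntegrable (fun x => (b - x ^ 2) ^ (-(3:ℝ)/2)) volume (-a) a :=
    ContinuousOn.intervalIntegrable <| (continuousOn_const.sub (continuousOn_pow 2)).rpow_const
      fun x hx' => Or.inl (sub_pos.mpr (hx x hx')).ne'
  rw [intervalIntegral.integral_eq_sub_of_hasDerivAt
    (fun x hx' => hasDerivAt_div_mul_sqrt_sub_sq (hx x hx')) hint, neg_sq]
  ring

lemma integral_chord_rpow_neg_three_halves {C y : ℝ} (hC : C ^ 2 < 1) (hy : y ^ 2 < 1) :
    ∫ x in (-(C * √(1 - y ^ 2)))..(C * √(1 - y ^ 2)), (1 - x ^ 2 - y ^ 2) ^ (-(3:ℝ)/2) =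
      2 * C / √(1 - C ^ 2) * (1 - y ^ 2)⁻¹ := by
  have hb : 0 < 1 - y ^ 2 := sub_pos.mpr hy
  have hsq : (C * √(1 - y ^ 2)) ^ 2 = C ^ 2 * (1 - y ^ 2) := by
    rw [mul_pow, Real.sq_sqrt hb.le]
  have hrearrange : ∀ x : ℝ, 1 - x ^ 2 - y ^ 2 = (1 - y ^ 2) - x ^ 2 := fun x => by ring
  simp only [hrearrange]
  rw [integral_sub_sq_rpow_neg_three_halves (by nlinarith), hsq,
    show 1 - y ^ 2 - C ^ 2 * (1 - y ^ 2) = (1 - y ^ 2) * (1 - C ^ 2) by ring,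
    Real.sqrt_mul hb.le]
  have hs : 0 < √(1 - y ^ 2) := Real.sqrt_pos.mpr hb
  have hc : 0 < √(1 - C ^ 2) := Real.sqrt_pos.mpr (sub_pos.mpr hC)
  field_simp

lemma hasDerivAt_artanh {y : ℝ} (hy : y ∈ Ioo (-1) 1) : HasDerivAt artanh (1 - y ^ 2)⁻¹ y := by
  have h1 : 1 - y ≠ 0 := by linarith [hy.2]
  have h2 : 1 + y ≠ 0 := by linarith [hy.1]
  have hq : HasDerivAt (fun y => (1 + y) / (1 - y)) ((1 * (1 - y) - (1 + y) * (-1)) / (1 - y) ^ 2) y :=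
    ((hasDerivAt_id' y).const_add 1).div ((hasDerivAt_id' y).const_sub 1) h1
  have h3 : 1 - y ^ 2 ≠ 0 := by
    rw [show 1 - y ^ 2 = (1 - y) * (1 + y) by ring]; exact mul_ne_zero h1 h2
  refine ((hq.log (div_ne_zero h2 h1)).div_const 2).congr_deriv ?_
  field_simp
  ring

lemma integral_inv_one_sub_sq {a b : ℝ} (ha : a ∈ Ioo (-1) 1) (hb : b ∈ Ioo (-1) 1) :
    ∫ y in a..b, (1 - y ^ 2)⁻¹ = artanh b - artanh a := by
  have hab : uIcc a b ⊆ Ioo (-1) 1 := ordConnected_Ioo.uIcc_subset ha hb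
  have hint : IntervalIntegrable (fun y : ℝ => (1 - y ^ 2)⁻¹) volume a b :=
    ContinuousOn.intervalIntegrable <| (continuousOn_const.sub (continuousOn_pow 2)).inv₀
      fun y hy => (sub_pos.mpr ((sq_lt_one_iff_abs_lt_one _).mpr (abs_lt.mpr (hab hy)))).ne'
  exact intervalIntegral.integral_eq_sub_of_hasDerivAt
    (fun y hy => hasDerivAt_artanh (hab hy)) hint

theorem area_distance_band_segment (C η : ℝ) (hC0 : 0 < C) (hC1 : C < 1)
    (hη0 : 0 ≤ η) (hη1 : η < 1) :
    (∫ y in (0:ℝ)..η, ∫ x in (-(C * Real.sqrt (1 - y ^ 2)))..(C * Real.sqrt (1 - y ^ 2)),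
        (1 - x ^ 2 - y ^ 2) ^ (-(3:ℝ)/2)) =
      2 * C / Real.sqrt (1 - C ^ 2) * artanh η := by
  have hC : C ^ 2 < 1 := by nlinarith
  have hη : η ∈ Ioo (-1) 1 := ⟨by linarith, hη1⟩
  have hband : uIcc 0 η ⊆ Ioo (-1) 1 := ordConnected_Ioo.uIcc_subset (by norm_num) hη
  rw [intervalIntegral.integral_congr fun y hy => integral_chord_rpow_neg_three_halves hC
      ((sq_lt_one_iff_abs_lt_one _).mpr (abs_lt.mpr (hband hy))),
    intervalIntegral.integral_const_mul, integral_inv_one_sub_sq (by norm_num) hη]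
  simp [artanh]
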